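/- arXiv:2005.14325 — 6 statements merged into one kernel-verified Lean document; each statement's English description precedes it below -/
import Mathlib

section
/- For all Ecumenical formulas A and B, the equivalence (A →_c B) ↔_i ¬(A ∧ ¬B) is provable in the Ecumenical sequent calculus LEci. -/
/-! Ecumenical first-order language and the sequent calculus LEci. -/

/-- Ecumenical first-order formulas. Predicates are applied to lists of variables
(variables are natural numbers). `iatom`/`catom` are intuitionistic/classical
predicate letters; `conj`, `neg`, `all`, `bot` are the neutral connectives; the
`i`/`c` prefixes mark intuitionistic/classical implication, disjunction and
existential quantification. -/
inductive Formula : Type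
  | bot : Formula
  | iatom (p : ℕ) (args : List ℕ) : Formula
  | catom (p : ℕ) (args : List ℕ) : Formula
  | neg (A : Formula) : Formula
  | conj (A B : Formula) : Formula
  | iimp (A B : Formula) : Formula
  | cimp (A B : Formula) : Formula
  | ivee (A B : Formula) : Formula
  | cvee (A B : Formula) : Formula
  | all (x : ℕ) (A : Formula) : Formula
  | iex (x : ℕ) (A : Formula) : Formula
  | cex (x : ℕ) (A : Formula) : Formula
  deriving DecidableEq

namespace Formula

/-- Free variables of a formula. -/
def fv : Formula → Finset ℕ
  | bot => ∅
  | iatom _ args => args.toFinset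
  | catom _ args => args.toFinset
  | neg A => A.fv
  | conj A B => A.fv ∪ B.fv
  | iimp A B => A.fv ∪ B.fv
  | cimp A B => A.fv ∪ B.fv
  | ivee A B => A.fv ∪ B.fv
  | cvee A B => A.fv ∪ B.fv
  | all x A => A.fv.erase x
  | iex x A => A.fv.erase x
  | cex x A => A.fv.erase x

/-- `A.subst y x` is `A[y/x]`: the substitution of the variable `y` for the
free occurrences of the variable `x`. -/
def subst (y x : ℕ) : Formula → Formula
  | bot => bot
  | iatom p args => iatom p (args.map fun z => if z = x then y else z)
  | catom p args => catom p (args.map fun z => if z = x then y else z)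
  | neg A => neg (A.subst y x)
  | conj A B => conj (A.subst y x) (B.subst y x)
  | iimp A B => iimp (A.subst y x) (B.subst y x)
  | cimp A B => cimp (A.subst y x) (B.subst y x)
  | ivee A B => ivee (A.subst y x) (B.subst y x)
  | cvee A B => cvee (A.subst y x) (B.subst y x)
  | all z A => if z = x then all z A else all z (A.subst y x)
  | iex z A => if z = x then iex z A else iex z (A.subst y x)
  | cex z A => if z = x then cex z A else cex z (A.subst y x)

end Formula

/-- the variable `y` does not occur free in any formula of `Γ`. -/
def FreshIn (y : ℕ) (Γ : Multiset Formula) : Prop := ∀ A ∈ Γ, y ∉ A.fv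

/-- The Ecumenical sequent calculus LEci.  `LEci Γ C` means that the
single-succedent sequent `Γ ⇒ C` is provable.  Antecedents are multisets. -/
inductive LEci : Multiset Formula → Formula → Prop
  | init (A : Formula) (Γ : Multiset Formula) : LEci (A ::ₘ Γ) A
  | weak {Γ : Multiset Formula} (A : Formula) : LEci Γ .bot → LEci Γ A
  | botL (Γ : Multiset Formula) (A : Formula) : LEci (.bot ::ₘ Γ) A
  | andL {Γ A B C} : LEci (A ::ₘ B ::ₘ Γ) C → LEci (.conj A B ::ₘ Γ) C
  | andR {Γ A B} : LEci Γ A → LEci Γ B → LEci Γ (.conj A B)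
  | iveeL {Γ A B C} : LEci (A ::ₘ Γ) C → LEci (B ::ₘ Γ) C →
      LEci (.ivee A B ::ₘ Γ) C
  | iveeR1 {Γ A B} : LEci Γ A → LEci Γ (.ivee A B)
  | iveeR2 {Γ A B} : LEci Γ B → LEci Γ (.ivee A B)
  | cveeL {Γ A B} : LEci (A ::ₘ Γ) .bot → LEci (B ::ₘ Γ) .bot →
      LEci (.cvee A B ::ₘ Γ) .bot
  | cveeR {Γ A B} : LEci (.neg A ::ₘ .neg B ::ₘ Γ) .bot → LEci Γ (.cvee A B)
  | iimpL {Γ A B C} : LEci (.iimp A B ::ₘ Γ) A → LEci (B ::ₘ Γ) C →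
      LEci (.iimp A B ::ₘ Γ) C
  | iimpR {Γ A B} : LEci (A ::ₘ Γ) B → LEci Γ (.iimp A B)
  | cimpL {Γ A B} : LEci (.cimp A B ::ₘ Γ) A → LEci (B ::ₘ Γ) .bot →
      LEci (.cimp A B ::ₘ Γ) .bot
  | cimpR {Γ A B} : LEci (A ::ₘ .neg B ::ₘ Γ) .bot → LEci Γ (.cimp A B)
  | negL {Γ A} : LEci (.neg A ::ₘ Γ) A → LEci (.neg A ::ₘ Γ) .bot
  | negR {Γ A} : LEci (A ::ₘ Γ) .bot → LEci Γ (.neg A)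
  | Lc {Γ p args} : LEci (.iatom p args ::ₘ Γ) .bot →
      LEci (.catom p args ::ₘ Γ) .bot
  | Rc {Γ p args} : LEci (.neg (.iatom p args) ::ₘ Γ) .bot →
      LEci Γ (.catom p args)
  | allL {Γ A C x} (y : ℕ) : LEci (A.subst y x ::ₘ .all x A ::ₘ Γ) C →
      LEci (.all x A ::ₘ Γ) C
  | allR {Γ A x} (y : ℕ)
      (hfresh : FreshIn y Γ ∧ y ∉ (Formula.all x A).fv) :
      LEci Γ (A.subst y x) → LEci Γ (.all x A)
  | iexL {Γ A C x} (y : ℕ)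
      (hfresh : FreshIn y Γ ∧ y ∉ (Formula.iex x A).fv ∧ y ∉ C.fv) :
      LEci (A.subst y x ::ₘ Γ) C → LEci (.iex x A ::ₘ Γ) C
  | iexR {Γ A x} (y : ℕ) : LEci Γ (A.subst y x) → LEci Γ (.iex x A)
  | cexL {Γ A x} (y : ℕ)
      (hfresh : FreshIn y Γ ∧ y ∉ (Formula.cex x A).fv) :
      LEci (A.subst y x ::ₘ Γ) .bot → LEci (.cex x A ::ₘ Γ) .bot
  | cexR {Γ A x} : LEci (.all x (.neg A) ::ₘ Γ) .bot → LEci Γ (.cex x A)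

/-- `⊢_LEci A` : the sequent `⇒ A` is provable in LEci. -/
def Provable (A : Formula) : Prop := LEci 0 A

/-- Ecumenical (intuitionistic) bi-implication `A ↔ᵢ B := (A →ᵢ B) ∧ (B →ᵢ A)`. -/
def iffi (A B : Formula) : Formula := .conj (.iimp A B) (.iimp B A)

/-- For all Ecumenical formulas `A`, `B`, the equivalence
`(A →_c B) ↔_i ¬(A ∧ ¬B)` is provable in LEci. -/
theorem stmt_2 (A B : Formula) :
    Provable (iffi (.cimp A B) (.neg (.conj A (.neg B)))) := by
  apply LEci.andR
  · -- A →c B ⇒ ¬(A ∧ ¬B)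
    apply LEci.iimpR
    apply LEci.negR
    -- A∧¬B, A→cB ⇒ ⊥
    apply LEci.andL
    -- A, ¬B, A→cB ⇒ ⊥
    have h : (Formula.conj A (.neg B)).neg.fv = (Formula.conj A (.neg B)).neg.fv := rfl
    rw [show (A ::ₘ Formula.neg B ::ₘ Formula.cimp A B ::ₘ 0)
        = (Formula.cimp A B ::ₘ A ::ₘ Formula.neg B ::ₘ 0) by
      rw [Multiset.cons_swap (Formula.neg B), Multiset.cons_swap A]]
    apply LEci.cimpL
    · rw [show (Formula.cimp A B ::ₘ A ::ₘ Formula.neg B ::ₘ 0)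
          = (A ::ₘ Formula.cimp A B ::ₘ Formula.neg B ::ₘ 0) from Multiset.cons_swap _ _ _]
      exact LEci.init A _
    · rw [show (B ::ₘ A ::ₘ Formula.neg B ::ₘ 0)
          = (Formula.neg B ::ₘ B ::ₘ A ::ₘ 0) by
        rw [Multiset.cons_swap A, Multiset.cons_swap B]]
      apply LEci.negL
      rw [show (Formula.neg B ::ₘ B ::ₘ A ::ₘ 0)
          = (B ::ₘ Formula.neg B ::ₘ A ::ₘ 0) from Multiset.cons_swap _ _ _]
      exact LEci.init B _
  · -- ¬(A∧¬B) ⇒ A→cB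
    apply LEci.iimpR
    apply LEci.cimpR
    rw [show (A ::ₘ Formula.neg B ::ₘ (Formula.conj A (.neg B)).neg ::ₘ 0)
        = ((Formula.conj A (.neg B)).neg ::ₘ A ::ₘ Formula.neg B ::ₘ 0) by
      rw [Multiset.cons_swap (Formula.neg B), Multiset.cons_swap A]]
    apply LEci.negL
    apply LEci.andR
    · rw [show ((Formula.conj A (.neg B)).neg ::ₘ A ::ₘ Formula.neg B ::ₘ 0)
          = (A ::ₘ (Formula.conj A (.neg B)).neg ::ₘ Formula.neg B ::ₘ 0) from
        Multiset.cons_swap _ _ _]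
      exact LEci.init A _
    · rw [show ((Formula.conj A (.neg B)).neg ::ₘ A ::ₘ Formula.neg B ::ₘ 0)
          = (Formula.neg B ::ₘ (Formula.conj A (.neg B)).neg ::ₘ A ::ₘ 0) by
        rw [Multiset.cons_swap A, Multiset.cons_swap ((Formula.conj A (.neg B)).neg)]]
      exact LEci.init (Formula.neg B) _
end

section
/- For every Ecumenical formula A and variable x, the equivalence (∃_c x.A) ↔_i ¬(∀x.¬A) is provable in the Ecumenical sequent calculus LEci. -/
/-- For every Ecumenical formula `A` and variable `x`, the
equivalence `(∃_c x.A) ↔_i ¬(∀x.¬A)` is provable in LEci. -/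
theorem stmt_3 (A : Formula) (x : ℕ) :
    Provable (iffi (.cex x A) (.neg (.all x (.neg A)))) := by
  set y := A.fv.sup id + 1 with hy
  have hyA : y ∉ A.fv := by
    intro h
    have := Finset.le_sup (f := id) h
    simp only [id] at this
    omega
  refine LEci.andR ?_ ?_
  · -- ∃_c x.A ⇒ ¬∀x.¬A
    apply LEci.iimpR
    apply LEci.negR
    rw [Multiset.cons_swap]
    apply LEci.cexL y
    · constructor
      · intro B hB
        simp only [Multiset.mem_cons, Multiset.notMem_zero, or_false] at hB
        subst hB
        exact fun h => hyA (Finset.mem_of_mem_erase h)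
      · exact fun h => hyA (Finset.mem_of_mem_erase h)
    · rw [Multiset.cons_swap]
      apply LEci.allL y
      show LEci (Formula.neg (A.subst y x) ::ₘ _) _
      apply LEci.negL
      rw [show (Formula.neg (A.subst y x) ::ₘ Formula.all x (Formula.neg A) ::ₘ
          A.subst y x ::ₘ 0) = A.subst y x ::ₘ Formula.neg (A.subst y x) ::ₘ
          Formula.all x (Formula.neg A) ::ₘ 0 by
        rw [Multiset.cons_swap (Formula.all x (Formula.neg A)) (A.subst y x),
            Multiset.cons_swap (Formula.neg (A.subst y x)) (A.subst y x)]]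
      exact LEci.init _ _
  · -- ¬∀x.¬A ⇒ ∃_c x.A
    apply LEci.iimpR
    apply LEci.cexR
    rw [Multiset.cons_swap]
    apply LEci.negL
    rw [Multiset.cons_swap]
    exact LEci.init _ _
end

section
/- Ecumenical consequence is intrinsically intuitionistic: for every finite multiset Γ of Ecumenical formulas and formula B, the sequent Γ ⇒ B is provable in LEci if and only if the formula (∧Γ) →_i B is provable in LEci (where ∧Γ is the conjunction of the formulas in Γ). -/
/-- The conjunction `∧Γ` of a finite list of formulas (the empty conjunction is
the unit `¬⊥`). -/
def conjList : List Formula → Formula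
  | [] => .neg .bot
  | [A] => A
  | A :: Γ => .conj A (conjList Γ)

/-!
The forward direction packs `Γ` into `∧Γ` with `∧L` (weakening by the closed formula `¬⊥` when
`Γ` is empty) and closes with `→ᵢR`. Conversely, the sequent `⇒ ⊥` is not derivable, so a proof
of `⇒ (∧Γ) →ᵢ B` ends with `→ᵢR` and yields `∧Γ ⇒ B`. Both `∧L` and the removal of `¬⊥` from the
antecedent are invertible, by an induction on derivations in which these formulas are either
principal (in `init`, `∧L`, `¬L`) or passive; unpacking `∧Γ` then gives back `Γ ⇒ B`.
-/

open Multiset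

theorem FreshIn.cons {y : ℕ} {A : Formula} {Γ : Multiset Formula} (hA : y ∉ A.fv)
    (h : FreshIn y Γ) : FreshIn y (A ::ₘ Γ) := by
  intro F hF
  rcases mem_cons.mp hF with rfl | hF
  exacts [hA, h F hF]

namespace LEci

variable {Γ : Multiset Formula} {A B C : Formula}

theorem swap (h : LEci (A ::ₘ B ::ₘ Γ) C) : LEci (B ::ₘ A ::ₘ Γ) C :=
  cons_swap A B Γ ▸ h

theorem rotate {D : Formula} (h : LEci (A ::ₘ B ::ₘ C ::ₘ Γ) D) :
    LEci (B ::ₘ C ::ₘ A ::ₘ Γ) D := by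
  rwa [cons_swap A B, cons_swap A C] at h

theorem cons_of_fv_eq_empty (hA : A.fv = ∅) (h : LEci Γ B) : LEci (A ::ₘ Γ) B := by
  have fresh {y : ℕ} {Γ : Multiset Formula} : FreshIn y Γ → FreshIn y (A ::ₘ Γ) :=
    FreshIn.cons (by simp [hA])
  induction h with
  | init B Γ => exact (init B (A ::ₘ Γ)).swap
  | weak B _ ih => exact ih.weak B
  | botL Γ B => exact (botL (A ::ₘ Γ) B).swap
  | andL _ ih => exact ih.rotate.andL.swap
  | andR _ _ ih₁ ih₂ => exact ih₁.andR ih₂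
  | iveeL _ _ ih₁ ih₂ => exact (ih₁.swap.iveeL ih₂.swap).swap
  | iveeR1 _ ih => exact ih.iveeR1
  | iveeR2 _ ih => exact ih.iveeR2
  | cveeL _ _ ih₁ ih₂ => exact (ih₁.swap.cveeL ih₂.swap).swap
  | cveeR _ ih => exact ih.rotate.cveeR
  | iimpL _ _ ih₁ ih₂ => exact (ih₁.swap.iimpL ih₂.swap).swap
  | iimpR _ ih => exact ih.swap.iimpR
  | cimpL _ _ ih₁ ih₂ => exact (ih₁.swap.cimpL ih₂.swap).swap
  | cimpR _ ih => exact ih.rotate.cimpR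
  | negL _ ih => exact ih.swap.negL.swap
  | negR _ ih => exact ih.swap.negR
  | Lc _ ih => exact ih.swap.Lc.swap
  | Rc _ ih => exact ih.swap.Rc
  | allL y _ ih => exact (ih.rotate.allL y).swap
  | allR y hy _ ih => exact ih.allR y ⟨fresh hy.1, hy.2⟩
  | iexL y hy _ ih => exact (ih.swap.iexL y ⟨fresh hy.1, hy.2⟩).swap
  | iexR y _ ih => exact ih.iexR y
  | cexL y hy _ ih => exact (ih.swap.cexL y ⟨fresh hy.1, hy.2⟩).swap
  | cexR _ ih => exact ih.swap.cexR

end LEci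

/-- Antecedent formulas whose left rule is invertible, with the formulas replacing them. -/
inductive Unfolds : Formula → Multiset Formula → Prop
  | conj (A B : Formula) : Unfolds (.conj A B) {A, B}
  | negBot : Unfolds (.neg .bot) 0

namespace Unfolds

variable {E : Formula} {Θ : Multiset Formula}

theorem fv_subset (hE : Unfolds E Θ) {F : Formula} (hF : F ∈ Θ) : F.fv ⊆ E.fv := by
  cases hE with
  | conj A B =>
    rcases (by simpa using hF : F = A ∨ F = B) with rfl | rfl
    exacts [Finset.subset_union_left, Finset.subset_union_right]
  | negBot => simp at hF

theorem freshIn {y : ℕ} {Δ : Multiset Formula} (hE : Unfolds E Θ)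
    (h : FreshIn y (E ::ₘ Δ)) : FreshIn y (Θ + Δ) := by
  intro F hF
  rcases mem_add.mp hF with hF | hF
  · exact fun hy => h E (mem_cons_self ..) (hE.fv_subset hF hy)
  · exact h F (mem_cons_of_mem hF)

theorem leci_add {Δ : Multiset Formula} (hE : Unfolds E Θ) : LEci (Θ + Δ) E := by
  cases hE with
  | conj A B => simpa [insert_eq_cons] using (LEci.init A _).andR (LEci.init B (A ::ₘ Δ)).swap
  | negBot => simpa using LEci.negR (LEci.botL Δ .bot)

end Unfolds

namespace LEci

variable {E A B C : Formula} {Θ Δ : Multiset Formula}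

theorem unfold (hE : Unfolds E Θ) (h : LEci (E ::ₘ Δ) B) : LEci (Θ + Δ) B := by
  have push {X Δ' C} (ih : ∀ {Δ}, E ::ₘ Δ = X ::ₘ E ::ₘ Δ' → LEci (Θ + Δ) C) :
      LEci (X ::ₘ (Θ + Δ')) C := by
    simpa only [add_cons] using ih (cons_swap ..)
  have push₂ {X Y Δ' C} (ih : ∀ {Δ}, E ::ₘ Δ = X ::ₘ Y ::ₘ E ::ₘ Δ' → LEci (Θ + Δ) C) :
      LEci (X ::ₘ Y ::ₘ (Θ + Δ')) C := by
    simpa only [add_cons] using ih (Δ := X ::ₘ Y ::ₘ Δ') (by rw [cons_swap E X, cons_swap E Y])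
  generalize hΓ : E ::ₘ Δ = Γ at h
  induction h generalizing Δ with
  | init A Γ =>
    rcases cons_eq_cons.mp hΓ with ⟨rfl, rfl⟩ | ⟨-, Δ', rfl, rfl⟩
    · exact hE.leci_add
    · rw [add_cons]; exact init A _
  | weak A _ ih => exact (ih hΓ).weak A
  | botL Γ A =>
    rcases cons_eq_cons.mp hΓ with ⟨rfl, -⟩ | ⟨-, Δ', rfl, rfl⟩
    · cases hE
    · rw [add_cons]; exact botL _ A
  | andL h ih =>
    rcases cons_eq_cons.mp hΓ with ⟨rfl, rfl⟩ | ⟨-, Δ', rfl, rfl⟩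
    · cases hE; simpa [insert_eq_cons] using h
    · rw [add_cons]; exact (push₂ ih).andL
  | andR _ _ ih₁ ih₂ => exact (ih₁ hΓ).andR (ih₂ hΓ)
  | iveeL _ _ ih₁ ih₂ =>
    rcases cons_eq_cons.mp hΓ with ⟨rfl, -⟩ | ⟨-, Δ', rfl, rfl⟩
    · cases hE
    · rw [add_cons]; exact (push ih₁).iveeL (push ih₂)
  | iveeR1 _ ih => exact (ih hΓ).iveeR1
  | iveeR2 _ ih => exact (ih hΓ).iveeR2
  | cveeL _ _ ih₁ ih₂ =>
    rcases cons_eq_cons.mp hΓ with ⟨rfl, -⟩ | ⟨-, Δ', rfl, rfl⟩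
    · cases hE
    · rw [add_cons]; exact (push ih₁).cveeL (push ih₂)
  | cveeR _ ih => subst hΓ; exact (push₂ ih).cveeR
  | iimpL _ _ ih₁ ih₂ =>
    rcases cons_eq_cons.mp hΓ with ⟨rfl, -⟩ | ⟨-, Δ', rfl, rfl⟩
    · cases hE
    · rw [add_cons]; exact (push ih₁).iimpL (push ih₂)
  | iimpR _ ih => subst hΓ; exact (push ih).iimpR
  | cimpL _ _ ih₁ ih₂ =>
    rcases cons_eq_cons.mp hΓ with ⟨rfl, -⟩ | ⟨-, Δ', rfl, rfl⟩
    · cases hE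
    · rw [add_cons]; exact (push ih₁).cimpL (push ih₂)
  | cimpR _ ih => subst hΓ; exact (push₂ ih).cimpR
  | negL _ ih =>
    rcases cons_eq_cons.mp hΓ with ⟨rfl, rfl⟩ | ⟨-, Δ', rfl, rfl⟩
    · cases hE; exact ih rfl
    · rw [add_cons]; exact (push ih).negL
  | negR _ ih => subst hΓ; exact (push ih).negR
  | Lc _ ih =>
    rcases cons_eq_cons.mp hΓ with ⟨rfl, -⟩ | ⟨-, Δ', rfl, rfl⟩
    · cases hE
    · rw [add_cons]; exact (push ih).Lc
  | Rc _ ih => subst hΓ; exact (push ih).Rc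
  | allL y _ ih =>
    rcases cons_eq_cons.mp hΓ with ⟨rfl, -⟩ | ⟨-, Δ', rfl, rfl⟩
    · cases hE
    · rw [add_cons]; exact (push₂ ih).allL y
  | allR y hy _ ih => subst hΓ; exact (ih rfl).allR y ⟨hE.freshIn hy.1, hy.2⟩
  | iexL y hy _ ih =>
    rcases cons_eq_cons.mp hΓ with ⟨rfl, -⟩ | ⟨-, Δ', rfl, rfl⟩
    · cases hE
    · rw [add_cons]; exact (push ih).iexL y ⟨hE.freshIn hy.1, hy.2⟩
  | iexR y _ ih => exact (ih hΓ).iexR y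
  | cexL y hy _ ih =>
    rcases cons_eq_cons.mp hΓ with ⟨rfl, -⟩ | ⟨-, Δ', rfl, rfl⟩
    · cases hE
    · rw [add_cons]; exact (push ih).cexL y ⟨hE.freshIn hy.1, hy.2⟩
  | cexR _ ih => subst hΓ; exact (push ih).cexR

theorem not_zero_bot : ¬ LEci 0 .bot := by
  suffices ∀ {Γ B}, LEci Γ B → Γ = 0 → B ≠ .bot from fun h => this h rfl rfl
  intro Γ B h
  induction h <;> simp_all

theorem iimp_zero_iff : LEci 0 (.iimp A B) ↔ LEci {A} B := by
  refine ⟨fun h => ?_, fun h => (cons_zero A ▸ h).iimpR⟩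
  generalize hΓ : (0 : Multiset Formula) = Γ at h
  generalize hC : Formula.iimp A B = C at h
  cases h with
  | weak _ h => exact absurd (hΓ ▸ h) not_zero_bot
  | iimpR h => cases hC; simpa [← hΓ] using h
  -- every other rule has a nonempty antecedent or another succedent
  | _ => simp_all

theorem andL_inv (h : LEci (.conj A B ::ₘ Δ) C) : LEci (A ::ₘ B ::ₘ Δ) C := by
  simpa [insert_eq_cons] using h.unfold (.conj A B)

theorem of_cons_negBot (h : LEci (.neg .bot ::ₘ Δ) C) : LEci Δ C := by
  simpa using h.unfold .negBot

theorem conjList_cons_iff :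
    ∀ (Γ : List Formula) (Δ : Multiset Formula) (B : Formula),
      LEci (conjList Γ ::ₘ Δ) B ↔ LEci (↑Γ + Δ) B
  | [], Δ, B => by
    rw [coe_nil, zero_add]
    exact ⟨of_cons_negBot, cons_of_fv_eq_empty rfl⟩
  | [A], Δ, B => by rw [conjList, ← cons_coe, coe_nil, cons_add, zero_add]
  | A :: A' :: Γ, Δ, B => by
    change LEci (.conj A (conjList (A' :: Γ)) ::ₘ Δ) B ↔ _
    rw [← cons_coe, cons_add, ← add_cons, ← conjList_cons_iff (A' :: Γ) (A ::ₘ Δ) B]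
    exact ⟨fun h => h.andL_inv.swap, fun h => h.swap.andL⟩

end LEci

/-- Ecumenical consequence is intrinsically intuitionistic: for
every finite multiset `Γ` of Ecumenical formulas (given by a list) and every
formula `B`, the sequent `Γ ⇒ B` is provable in LEci iff `(∧Γ) →_i B` is
provable in LEci. -/
theorem stmt_8 (Γ : List Formula) (B : Formula) :
    LEci (↑Γ : Multiset Formula) B ↔ Provable (.iimp (conjList Γ) B) := by
  rw [Provable, LEci.iimp_zero_iff, ← cons_zero, LEci.conjList_cons_iff, add_zero]
end

section
/- For every Ecumenical formula A and every externally classical Ecumenical formula B, both (A →_c B) →_i (A →_i B) and (A ∧ (A →_c B)) →_i B are provable in the Ecumenical sequent calculus LEci. -/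
/-- A formula is externally classical iff it is `⊥`, a classical predicate
letter, or its root operator is classical (`→_c`, `∨_c`, `∃_c`). -/
def ExtClassical : Formula → Prop
  | .bot => True
  | .catom _ _ => True
  | .cimp _ _ => True
  | .cvee _ _ => True
  | .cex _ _ => True
  | _ => False


namespace StmtNine

open Formula

lemma exch {Γ Δ : Multiset Formula} {C : Formula} (h : Γ = Δ) :
    LEci Γ C → LEci Δ C := by intro hp; rwa [h] at hp

lemma swap (a b : Formula) (s : Multiset Formula) :
    a ::ₘ b ::ₘ s = b ::ₘ a ::ₘ s := Multiset.cons_swap a b s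

lemma rotl3 (a b c : Formula) (s : Multiset Formula) :
    a ::ₘ b ::ₘ c ::ₘ s = b ::ₘ c ::ₘ a ::ₘ s := by
  rw [Multiset.cons_swap a b, Multiset.cons_swap a c]

lemma fresh_not_mem (S : Finset ℕ) : S.sup id + 1 ∉ S := by
  intro h
  have := Finset.le_sup (f := id) h
  simp only [id] at this
  omega

lemma key (A B : Formula) (hB : ExtClassical B) :
    LEci (A ::ₘ Formula.cimp A B ::ₘ 0) B := by
  cases B with
  | iatom p args => exact hB.elim
  | neg C => exact hB.elim
  | conj C D => exact hB.elim
  | iimp C D => exact hB.elim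
  | ivee C D => exact hB.elim
  | all x C => exact hB.elim
  | iex x C => exact hB.elim
  | bot =>
      apply exch (swap _ _ _)
      apply LEci.cimpL
      · exact exch (swap _ _ _) (LEci.init A _)
      · exact LEci.botL _ _
  | catom p args =>
      apply LEci.Rc
      -- goal: neg(iatom) ::ₘ A ::ₘ cimp ::ₘ 0 ⇒ ⊥ ; bring cimp to front
      apply exch (rotl3 (Formula.cimp A (.catom p args)) (.neg (.iatom p args)) A 0) ?_
      apply LEci.cimpL
      · exact exch (rotl3 A (Formula.cimp A (.catom p args)) (.neg (.iatom p args)) 0)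
          (LEci.init A _)
      · apply LEci.Lc
        apply exch (swap (.neg (.iatom p args)) (.iatom p args) _)
        apply LEci.negL
        exact exch (swap (.iatom p args) (.neg (.iatom p args)) _) (LEci.init _ _)
  | cimp C D =>
      apply LEci.cimpR
      apply exch (show (Formula.cimp A (.cimp C D)) ::ₘ C ::ₘ .neg D ::ₘ A ::ₘ 0
            = C ::ₘ .neg D ::ₘ A ::ₘ (Formula.cimp A (.cimp C D)) ::ₘ 0 by
          rw [Multiset.cons_swap (Formula.cimp A (.cimp C D)) C,
              Multiset.cons_swap (Formula.cimp A (.cimp C D)) (Formula.neg D),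
              Multiset.cons_swap (Formula.cimp A (.cimp C D)) A])
      apply LEci.cimpL
      · apply exch (show A ::ₘ (Formula.cimp A (.cimp C D)) ::ₘ C ::ₘ .neg D ::ₘ 0
              = (Formula.cimp A (.cimp C D)) ::ₘ C ::ₘ .neg D ::ₘ A ::ₘ 0 by
            rw [Multiset.cons_swap A (Formula.cimp A (.cimp C D)),
                Multiset.cons_swap A C, Multiset.cons_swap A (Formula.neg D)])
        exact LEci.init A _
      · apply LEci.cimpL
        · exact exch (swap C (.cimp C D) _) (LEci.init C _)
        · apply exch (rotl3 (Formula.neg D) D C _)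
          apply LEci.negL
          exact exch (swap D (.neg D) _) (LEci.init D _)
  | cvee C D =>
      apply LEci.cveeR
      apply exch (show (Formula.cimp A (.cvee C D)) ::ₘ .neg C ::ₘ .neg D ::ₘ A ::ₘ 0
            = .neg C ::ₘ .neg D ::ₘ A ::ₘ (Formula.cimp A (.cvee C D)) ::ₘ 0 by
          rw [Multiset.cons_swap (Formula.cimp A (.cvee C D)) (Formula.neg C),
              Multiset.cons_swap (Formula.cimp A (.cvee C D)) (Formula.neg D),
              Multiset.cons_swap (Formula.cimp A (.cvee C D)) A])
      apply LEci.cimpL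
      · apply exch (show A ::ₘ (Formula.cimp A (.cvee C D)) ::ₘ .neg C ::ₘ .neg D ::ₘ 0
              = (Formula.cimp A (.cvee C D)) ::ₘ .neg C ::ₘ .neg D ::ₘ A ::ₘ 0 by
            rw [Multiset.cons_swap A (Formula.cimp A (.cvee C D)),
                Multiset.cons_swap A (Formula.neg C), Multiset.cons_swap A (Formula.neg D)])
        exact LEci.init A _
      · apply LEci.cveeL
        · apply exch (swap (.neg C) C _)
          apply LEci.negL
          exact exch (swap C (.neg C) _) (LEci.init C _)
        · apply exch (rotl3 (Formula.neg D) D (.neg C) _)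
          apply LEci.negL
          exact exch (swap D (.neg D) _) (LEci.init D _)
  | cex x C =>
      apply LEci.cexR
      apply exch (show (Formula.cimp A (.cex x C)) ::ₘ .all x (.neg C) ::ₘ A ::ₘ 0
            = .all x (.neg C) ::ₘ A ::ₘ (Formula.cimp A (.cex x C)) ::ₘ 0 by
          rw [Multiset.cons_swap (Formula.cimp A (.cex x C)) (Formula.all x (.neg C)),
              Multiset.cons_swap (Formula.cimp A (.cex x C)) A])
      apply LEci.cimpL
      · apply exch (show A ::ₘ (Formula.cimp A (.cex x C)) ::ₘ .all x (.neg C) ::ₘ 0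
              = (Formula.cimp A (.cex x C)) ::ₘ .all x (.neg C) ::ₘ A ::ₘ 0 by
            rw [Multiset.cons_swap A (Formula.cimp A (.cex x C)),
                Multiset.cons_swap A (Formula.all x (.neg C))])
        exact LEci.init A _
      · set y := (A.fv ∪ C.fv).sup id + 1 with hy
        have hyA : y ∉ A.fv := fun h => fresh_not_mem _ (Finset.mem_union_left _ h)
        have hyC : y ∉ C.fv := fun h => fresh_not_mem _ (Finset.mem_union_right _ h)
        apply LEci.cexL y
        · refine ⟨?_, ?_⟩
          · intro E hE
            simp only [Multiset.mem_cons, Multiset.notMem_zero, or_false] at hE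
            rcases hE with rfl | rfl
            · exact fun h => hyC (Finset.mem_of_mem_erase h)
            · exact hyA
          · exact fun h => hyC (Finset.mem_of_mem_erase h)
        · apply exch (swap (.all x (.neg C)) (C.subst y x) _)
          apply LEci.allL y
          have hsub : (Formula.neg C).subst y x = Formula.neg (C.subst y x) := rfl
          rw [hsub]
          apply LEci.negL
          exact exch (rotl3 (C.subst y x) (.neg (C.subst y x)) (.all x (.neg C)) _)
            (LEci.init _ _)

end StmtNine

/-- For every Ecumenical formula `A` and every externally
classical formula `B`, both `(A →_c B) →_i (A →_i B)` and
`(A ∧ (A →_c B)) →_i B` are provable in LEci. -/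
theorem stmt_9 (A B : Formula) (hB : ExtClassical B) :
    Provable (.iimp (.cimp A B) (.iimp A B)) ∧
    Provable (.iimp (.conj A (.cimp A B)) B) := by
  constructor
  · exact LEci.iimpR (LEci.iimpR (StmtNine.key A B hB))
  · exact LEci.iimpR (LEci.andL (StmtNine.key A B hB))
end

section
/- The intuitionistic versions of the K axioms are provable in labEK: for all Ecumenical modal formulas A, B and every label x, the sequents ⊢ x: □(A →_i B) →_i (□A →_i □B), ⊢ x: □(A →_i B) →_i (◇_iA →_i ◇_iB), ⊢ x: ◇_i(A ∨_i B) →_i (◇_iA ∨_i ◇_iB), ⊢ x: (◇_iA →_i □B) →_i □(A →_i B), and ⊢ x: ◇_i⊥ →_i ⊥ are all provable in labEK. -/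
/-! Ecumenical modal formulas and the labeled sequent calculus labEK. -/

/-- Ecumenical modal formulas: intuitionistic atoms `iatom`, classical atoms
`catom`, the neutral connectives `⊥, ¬, ∧, □`, the intuitionistic connectives
`→_i, ∨_i, ◇_i` and the classical connectives `→_c, ∨_c, ◇_c`. -/
inductive MFormula : Type
  | bot : MFormula
  | iatom (p : ℕ) : MFormula
  | catom (p : ℕ) : MFormula
  | neg (A : MFormula) : MFormula
  | conj (A B : MFormula) : MFormula
  | iimp (A B : MFormula) : MFormula
  | cimp (A B : MFormula) : MFormula
  | ivee (A B : MFormula) : MFormula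
  | cvee (A B : MFormula) : MFormula
  | box (A : MFormula) : MFormula
  | idia (A : MFormula) : MFormula
  | cdia (A : MFormula) : MFormula
  deriving DecidableEq

/-- Labeled modal formulas: either a relational atom `xRy` or a labeled
formula `x : A`, where labels `x, y` are natural numbers. -/
inductive LForm : Type
  | rel (x y : ℕ) : LForm
  | lab (x : ℕ) (A : MFormula) : LForm
  deriving DecidableEq

/-- The labels occurring in a labeled modal formula. -/
def LForm.labels : LForm → Finset ℕ
  | .rel x y => {x, y}
  | .lab x _ => {x}

/-- The label `y` does not occur in any formula of `Γ`. -/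
def FreshL (y : ℕ) (Γ : Multiset LForm) : Prop := ∀ f ∈ Γ, y ∉ f.labels

/-- The labeled Ecumenical modal sequent calculus labEK.  `LabEK Γ z C` means
that the labeled sequent `Γ ⊢ z:C` is provable, where `Γ` is a multiset of
labeled modal formulas. -/
inductive LabEK : Multiset LForm → ℕ → MFormula → Prop
  | init (x : ℕ) (A : MFormula) (Γ : Multiset LForm) : LabEK (.lab x A ::ₘ Γ) x A
  | weak {Γ : Multiset LForm} (y : ℕ) {x : ℕ} {A : MFormula} :
      LabEK Γ y .bot → LabEK Γ x A
  | botL (x : ℕ) (Γ : Multiset LForm) (z : ℕ) (C : MFormula) :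
      LabEK (.lab x .bot ::ₘ Γ) z C
  | andL {Γ x A B z C} : LabEK (.lab x A ::ₘ .lab x B ::ₘ Γ) z C →
      LabEK (.lab x (.conj A B) ::ₘ Γ) z C
  | andR {Γ x A B} : LabEK Γ x A → LabEK Γ x B → LabEK Γ x (.conj A B)
  | iveeL {Γ x A B z C} : LabEK (.lab x A ::ₘ Γ) z C → LabEK (.lab x B ::ₘ Γ) z C →
      LabEK (.lab x (.ivee A B) ::ₘ Γ) z C
  | iveeR1 {Γ x A B} : LabEK Γ x A → LabEK Γ x (.ivee A B)
  | iveeR2 {Γ x A B} : LabEK Γ x B → LabEK Γ x (.ivee A B)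
  | cveeL {Γ x A B} : LabEK (.lab x A ::ₘ Γ) x .bot → LabEK (.lab x B ::ₘ Γ) x .bot →
      LabEK (.lab x (.cvee A B) ::ₘ Γ) x .bot
  | cveeR {Γ x A B} : LabEK (.lab x (.neg A) ::ₘ .lab x (.neg B) ::ₘ Γ) x .bot →
      LabEK Γ x (.cvee A B)
  | iimpL {Γ x A B z C} : LabEK (.lab x (.iimp A B) ::ₘ Γ) x A →
      LabEK (.lab x B ::ₘ Γ) z C → LabEK (.lab x (.iimp A B) ::ₘ Γ) z C
  | iimpR {Γ x A B} : LabEK (.lab x A ::ₘ Γ) x B → LabEK Γ x (.iimp A B)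
  | cimpL {Γ x A B} (y : ℕ) : LabEK (.lab x (.cimp A B) ::ₘ Γ) x A →
      LabEK (.lab x B ::ₘ Γ) y .bot → LabEK (.lab x (.cimp A B) ::ₘ Γ) x .bot
  | cimpR {Γ x A B} : LabEK (.lab x A ::ₘ .lab x (.neg B) ::ₘ Γ) x .bot →
      LabEK Γ x (.cimp A B)
  | negL {Γ x A} : LabEK (.lab x (.neg A) ::ₘ Γ) x A →
      LabEK (.lab x (.neg A) ::ₘ Γ) x .bot
  | negR {Γ x A} : LabEK (.lab x A ::ₘ Γ) x .bot → LabEK Γ x (.neg A)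
  | Lc {Γ x p} : LabEK (.lab x (.iatom p) ::ₘ Γ) x .bot →
      LabEK (.lab x (.catom p) ::ₘ Γ) x .bot
  | Rc {Γ x p} : LabEK (.lab x (.neg (.iatom p)) ::ₘ Γ) x .bot →
      LabEK Γ x (.catom p)
  | boxL {Γ x y A z C} : LabEK (.rel x y ::ₘ .lab y A ::ₘ .lab x (.box A) ::ₘ Γ) z C →
      LabEK (.rel x y ::ₘ .lab x (.box A) ::ₘ Γ) z C
  | boxR {Γ x A} (y : ℕ) (hfresh : y ≠ x ∧ FreshL y Γ) :
      LabEK (.rel x y ::ₘ Γ) y A → LabEK Γ x (.box A)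
  | idiaL {Γ x A z C} (y : ℕ) (hfresh : y ≠ x ∧ y ≠ z ∧ FreshL y Γ) :
      LabEK (.rel x y ::ₘ .lab y A ::ₘ Γ) z C → LabEK (.lab x (.idia A) ::ₘ Γ) z C
  | idiaR {Γ x y A} : LabEK (.rel x y ::ₘ Γ) y A →
      LabEK (.rel x y ::ₘ Γ) x (.idia A)
  | cdiaL {Γ x A} (y : ℕ) (hfresh : y ≠ x ∧ FreshL y Γ) :
      LabEK (.rel x y ::ₘ .lab y A ::ₘ Γ) x .bot →
      LabEK (.lab x (.cdia A) ::ₘ Γ) x .bot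
  | cdiaR {Γ x A} : LabEK (.lab x (.box (.neg A)) ::ₘ Γ) x .bot →
      LabEK Γ x (.cdia A)

namespace LabEKAux

theorem ofEq {Γ Δ : Multiset LForm} {z C} (h : LabEK Γ z C) (e : Γ = Δ) :
    LabEK Δ z C := e ▸ h

theorem initMem {x A} {Γ : Multiset LForm} (h : LForm.lab x A ∈ Γ) :
    LabEK Γ x A := by
  have := LabEK.init x A (Γ.erase (LForm.lab x A))
  exact ofEq this (Multiset.cons_erase h)

theorem r3 (a b c : LForm) (s : Multiset LForm) :
    a ::ₘ b ::ₘ c ::ₘ s = c ::ₘ a ::ₘ b ::ₘ s := by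
  rw [Multiset.cons_swap b c, Multiset.cons_swap a c]

theorem r4 (a b c d : LForm) (s : Multiset LForm) :
    a ::ₘ b ::ₘ c ::ₘ d ::ₘ s = d ::ₘ a ::ₘ b ::ₘ c ::ₘ s := by
  rw [Multiset.cons_swap c d, Multiset.cons_swap b d, Multiset.cons_swap a d]

theorem fresh2 {y : ℕ} {f : LForm} {Γ : Multiset LForm}
    (h1 : y ∉ f.labels) (h2 : FreshL y Γ) : FreshL y (f ::ₘ Γ) := by
  intro g hg
  rcases Multiset.mem_cons.mp hg with h | h
  · exact h ▸ h1
  · exact h2 g h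

theorem fresh0 {y : ℕ} : FreshL y (0 : Multiset LForm) := by
  intro g hg; exact absurd hg (Multiset.notMem_zero g)

theorem freshLab {y x : ℕ} {A : MFormula} (h : y ≠ x) :
    y ∉ (LForm.lab x A).labels := by
  simp [LForm.labels, h]

end LabEKAux

open LabEKAux

/-- the intuitionistic versions of the K axioms are provable in
labEK: `□(A →_i B) →_i (□A →_i □B)`, `□(A →_i B) →_i (◇_iA →_i ◇_iB)`,
`◇_i(A ∨_i B) →_i (◇_iA ∨_i ◇_iB)`, `(◇_iA →_i □B) →_i □(A →_i B)` and
`◇_i⊥ →_i ⊥`, at any label `x`. -/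

theorem stmt_15 (A B : MFormula) (x : ℕ) :
    LabEK 0 x (.iimp (.box (.iimp A B)) (.iimp (.box A) (.box B))) ∧
    LabEK 0 x (.iimp (.box (.iimp A B)) (.iimp (.idia A) (.idia B))) ∧
    LabEK 0 x (.iimp (.idia (.ivee A B)) (.ivee (.idia A) (.idia B))) ∧
    LabEK 0 x (.iimp (.iimp (.idia A) (.box B)) (.box (.iimp A B))) ∧
    LabEK 0 x (.iimp (.idia .bot) .bot) := by

  refine ⟨?_, ?_, ?_, ?_, ?_⟩
  · -- □(A→B) →ᵢ (□A →ᵢ □B)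
    apply LabEK.iimpR
    apply LabEK.iimpR
    apply LabEK.boxR (x+1) ⟨by omega, fresh2 (freshLab (by omega))
      (fresh2 (freshLab (by omega)) fresh0)⟩
    apply LabEK.boxL
    rw [Multiset.cons_swap (LForm.lab (x+1) A) (LForm.lab x (.box A)),
        Multiset.cons_swap (LForm.lab (x+1) A) (LForm.lab x (.box (.iimp A B)))]
    -- now: R ::ₘ x:□A ::ₘ x:□(A→B) ::ₘ (x+1):A ::ₘ 0
    rw [Multiset.cons_swap (LForm.lab x (.box A)) (LForm.lab x (.box (.iimp A B)))]
    apply LabEK.boxL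
    -- R ::ₘ (x+1):(A→B) ::ₘ x:□(A→B) ::ₘ x:□A ::ₘ (x+1):A ::ₘ 0 ⊢ x+1 : B
    rw [Multiset.cons_swap (LForm.rel x (x+1)) (LForm.lab (x+1) (.iimp A B))]
    apply LabEK.iimpL
    · exact initMem (by simp)
    · exact initMem (by simp)
  · -- □(A→B) →ᵢ (◇A →ᵢ ◇B)
    apply LabEK.iimpR
    apply LabEK.iimpR
    apply LabEK.idiaL (x+1) ⟨by omega, by omega,
      fresh2 (freshLab (by omega)) fresh0⟩
    -- R ::ₘ (x+1):A ::ₘ x:□(A→B) ::ₘ 0 ⊢ x : ◇B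
    rw [Multiset.cons_swap (LForm.lab (x+1) A) (LForm.lab x (.box (.iimp A B)))]
    apply LabEK.boxL
    -- R ::ₘ (x+1):(A→B) ::ₘ x:□(A→B) ::ₘ (x+1):A ::ₘ 0 ⊢ x : ◇B
    apply LabEK.idiaR
    rw [Multiset.cons_swap (LForm.rel x (x+1)) (LForm.lab (x+1) (.iimp A B))]
    apply LabEK.iimpL
    · exact initMem (by simp)
    · exact initMem (by simp)
  · -- ◇(A∨B) →ᵢ ◇A ∨ᵢ ◇B
    apply LabEK.iimpR
    apply LabEK.idiaL (x+1) ⟨by omega, by omega, fresh0⟩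
    rw [Multiset.cons_swap (LForm.rel x (x+1)) (LForm.lab (x+1) (.ivee A B))]
    apply LabEK.iveeL
    · apply LabEK.iveeR1
      rw [Multiset.cons_swap (LForm.lab (x+1) A) (LForm.rel x (x+1))]
      apply LabEK.idiaR
      exact initMem (by simp)
    · apply LabEK.iveeR2
      rw [Multiset.cons_swap (LForm.lab (x+1) B) (LForm.rel x (x+1))]
      apply LabEK.idiaR
      exact initMem (by simp)
  · -- (◇A →ᵢ □B) →ᵢ □(A→B)
    apply LabEK.iimpR
    apply LabEK.boxR (x+1) ⟨by omega, fresh2 (freshLab (by omega)) fresh0⟩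
    apply LabEK.iimpR
    -- (x+1):A ::ₘ R ::ₘ x:(◇A→□B) ::ₘ 0 ⊢ x+1 : B
    rw [r3 (LForm.lab (x+1) A) (LForm.rel x (x+1)) (LForm.lab x (.iimp (.idia A) (.box B))) 0]
    apply LabEK.iimpL
    · rw [r3 (LForm.lab x (.iimp (.idia A) (.box B))) (LForm.lab (x+1) A) (LForm.rel x (x+1)) 0]
      apply LabEK.idiaR
      exact initMem (by simp)
    · -- x:□B ::ₘ (x+1):A ::ₘ R ::ₘ 0 ⊢ x+1 : B
      rw [r3 (LForm.lab x (.box B)) (LForm.lab (x+1) A) (LForm.rel x (x+1)) 0]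
      apply LabEK.boxL
      exact initMem (by simp)
  · -- ◇⊥ →ᵢ ⊥
    apply LabEK.iimpR
    apply LabEK.idiaL (x+1) ⟨by omega, by omega, fresh0⟩
    rw [Multiset.cons_swap (LForm.rel x (x+1)) (LForm.lab (x+1) .bot)]
    exact LabEK.botL _ _ _ _
end

section
/- In labEK, for every Ecumenical modal formula A and labels x, y: (i) the sequent xRx ⊢ x:(□A →_i A) ∧ (A →_i ◇_iA) is provable in labEK; (ii) the sequent ⊢ x: ¬◇_i¬(A ∨_i ¬A) is provable in labEK; and (iii) in labEK extended with the reflexivity rule T (from xRx, Γ ⊢ w:C infer Γ ⊢ w:C), the sequent x:□(A ∨_i ¬A) ⊢ x:(A ∨_i ¬A) is provable. Consequently, in labEK+T with cut, if additionally ¬◇_i¬B →_i □B is assumed for all formulas B (inter-definability of □ and ◇_i), then ⊢ x:(A ∨_i ¬A) is provable for every A, i.e. intuitionistic KT collapses to a classical system. -/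
/-- labEK extended with the reflexivity rule `T`
(from `xRx, Γ ⊢ w:C` infer `Γ ⊢ w:C`). -/
inductive LabEKT : Multiset LForm → ℕ → MFormula → Prop
  | init (x : ℕ) (A : MFormula) (Γ : Multiset LForm) : LabEKT (.lab x A ::ₘ Γ) x A
  | weak {Γ : Multiset LForm} (y : ℕ) {x : ℕ} {A : MFormula} :
      LabEKT Γ y .bot → LabEKT Γ x A
  | botL (x : ℕ) (Γ : Multiset LForm) (z : ℕ) (C : MFormula) :
      LabEKT (.lab x .bot ::ₘ Γ) z C
  | andL {Γ x A B z C} : LabEKT (.lab x A ::ₘ .lab x B ::ₘ Γ) z C →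
      LabEKT (.lab x (.conj A B) ::ₘ Γ) z C
  | andR {Γ x A B} : LabEKT Γ x A → LabEKT Γ x B → LabEKT Γ x (.conj A B)
  | iveeL {Γ x A B z C} : LabEKT (.lab x A ::ₘ Γ) z C → LabEKT (.lab x B ::ₘ Γ) z C →
      LabEKT (.lab x (.ivee A B) ::ₘ Γ) z C
  | iveeR1 {Γ x A B} : LabEKT Γ x A → LabEKT Γ x (.ivee A B)
  | iveeR2 {Γ x A B} : LabEKT Γ x B → LabEKT Γ x (.ivee A B)
  | cveeL {Γ x A B} : LabEKT (.lab x A ::ₘ Γ) x .bot → LabEKT (.lab x B ::ₘ Γ) x .bot →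
      LabEKT (.lab x (.cvee A B) ::ₘ Γ) x .bot
  | cveeR {Γ x A B} : LabEKT (.lab x (.neg A) ::ₘ .lab x (.neg B) ::ₘ Γ) x .bot →
      LabEKT Γ x (.cvee A B)
  | iimpL {Γ x A B z C} : LabEKT (.lab x (.iimp A B) ::ₘ Γ) x A →
      LabEKT (.lab x B ::ₘ Γ) z C → LabEKT (.lab x (.iimp A B) ::ₘ Γ) z C
  | iimpR {Γ x A B} : LabEKT (.lab x A ::ₘ Γ) x B → LabEKT Γ x (.iimp A B)
  | cimpL {Γ x A B} (y : ℕ) : LabEKT (.lab x (.cimp A B) ::ₘ Γ) x A →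
      LabEKT (.lab x B ::ₘ Γ) y .bot → LabEKT (.lab x (.cimp A B) ::ₘ Γ) x .bot
  | cimpR {Γ x A B} : LabEKT (.lab x A ::ₘ .lab x (.neg B) ::ₘ Γ) x .bot →
      LabEKT Γ x (.cimp A B)
  | negL {Γ x A} : LabEKT (.lab x (.neg A) ::ₘ Γ) x A →
      LabEKT (.lab x (.neg A) ::ₘ Γ) x .bot
  | negR {Γ x A} : LabEKT (.lab x A ::ₘ Γ) x .bot → LabEKT Γ x (.neg A)
  | Lc {Γ x p} : LabEKT (.lab x (.iatom p) ::ₘ Γ) x .bot →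
      LabEKT (.lab x (.catom p) ::ₘ Γ) x .bot
  | Rc {Γ x p} : LabEKT (.lab x (.neg (.iatom p)) ::ₘ Γ) x .bot →
      LabEKT Γ x (.catom p)
  | boxL {Γ x y A z C} : LabEKT (.rel x y ::ₘ .lab y A ::ₘ .lab x (.box A) ::ₘ Γ) z C →
      LabEKT (.rel x y ::ₘ .lab x (.box A) ::ₘ Γ) z C
  | boxR {Γ x A} (y : ℕ) (hfresh : y ≠ x ∧ FreshL y Γ) :
      LabEKT (.rel x y ::ₘ Γ) y A → LabEKT Γ x (.box A)
  | idiaL {Γ x A z C} (y : ℕ) (hfresh : y ≠ x ∧ y ≠ z ∧ FreshL y Γ) :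
      LabEKT (.rel x y ::ₘ .lab y A ::ₘ Γ) z C → LabEKT (.lab x (.idia A) ::ₘ Γ) z C
  | idiaR {Γ x y A} : LabEKT (.rel x y ::ₘ Γ) y A →
      LabEKT (.rel x y ::ₘ Γ) x (.idia A)
  | cdiaL {Γ x A} (y : ℕ) (hfresh : y ≠ x ∧ FreshL y Γ) :
      LabEKT (.rel x y ::ₘ .lab y A ::ₘ Γ) x .bot →
      LabEKT (.lab x (.cdia A) ::ₘ Γ) x .bot
  | cdiaR {Γ x A} : LabEKT (.lab x (.box (.neg A)) ::ₘ Γ) x .bot →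
      LabEKT Γ x (.cdia A)
  | T {Γ : Multiset LForm} (x : ℕ) {w : ℕ} {C : MFormula} :
      LabEKT (.rel x x ::ₘ Γ) w C → LabEKT Γ w C

/-- labEK extended with the reflexivity rule `T`, the cut rule, and the
axiom scheme `¬◇_i¬B →_i □B` (inter-definability of `□` and `◇_i`) assumed
for all formulas `B`. -/
inductive LabEKTC : Multiset LForm → ℕ → MFormula → Prop
  | init (x : ℕ) (A : MFormula) (Γ : Multiset LForm) : LabEKTC (.lab x A ::ₘ Γ) x A
  | weak {Γ : Multiset LForm} (y : ℕ) {x : ℕ} {A : MFormula} :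
      LabEKTC Γ y .bot → LabEKTC Γ x A
  | botL (x : ℕ) (Γ : Multiset LForm) (z : ℕ) (C : MFormula) :
      LabEKTC (.lab x .bot ::ₘ Γ) z C
  | andL {Γ x A B z C} : LabEKTC (.lab x A ::ₘ .lab x B ::ₘ Γ) z C →
      LabEKTC (.lab x (.conj A B) ::ₘ Γ) z C
  | andR {Γ x A B} : LabEKTC Γ x A → LabEKTC Γ x B → LabEKTC Γ x (.conj A B)
  | iveeL {Γ x A B z C} : LabEKTC (.lab x A ::ₘ Γ) z C → LabEKTC (.lab x B ::ₘ Γ) z C →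
      LabEKTC (.lab x (.ivee A B) ::ₘ Γ) z C
  | iveeR1 {Γ x A B} : LabEKTC Γ x A → LabEKTC Γ x (.ivee A B)
  | iveeR2 {Γ x A B} : LabEKTC Γ x B → LabEKTC Γ x (.ivee A B)
  | cveeL {Γ x A B} : LabEKTC (.lab x A ::ₘ Γ) x .bot → LabEKTC (.lab x B ::ₘ Γ) x .bot →
      LabEKTC (.lab x (.cvee A B) ::ₘ Γ) x .bot
  | cveeR {Γ x A B} : LabEKTC (.lab x (.neg A) ::ₘ .lab x (.neg B) ::ₘ Γ) x .bot →
      LabEKTC Γ x (.cvee A B)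
  | iimpL {Γ x A B z C} : LabEKTC (.lab x (.iimp A B) ::ₘ Γ) x A →
      LabEKTC (.lab x B ::ₘ Γ) z C → LabEKTC (.lab x (.iimp A B) ::ₘ Γ) z C
  | iimpR {Γ x A B} : LabEKTC (.lab x A ::ₘ Γ) x B → LabEKTC Γ x (.iimp A B)
  | cimpL {Γ x A B} (y : ℕ) : LabEKTC (.lab x (.cimp A B) ::ₘ Γ) x A →
      LabEKTC (.lab x B ::ₘ Γ) y .bot → LabEKTC (.lab x (.cimp A B) ::ₘ Γ) x .bot
  | cimpR {Γ x A B} : LabEKTC (.lab x A ::ₘ .lab x (.neg B) ::ₘ Γ) x .bot →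
      LabEKTC Γ x (.cimp A B)
  | negL {Γ x A} : LabEKTC (.lab x (.neg A) ::ₘ Γ) x A →
      LabEKTC (.lab x (.neg A) ::ₘ Γ) x .bot
  | negR {Γ x A} : LabEKTC (.lab x A ::ₘ Γ) x .bot → LabEKTC Γ x (.neg A)
  | Lc {Γ x p} : LabEKTC (.lab x (.iatom p) ::ₘ Γ) x .bot →
      LabEKTC (.lab x (.catom p) ::ₘ Γ) x .bot
  | Rc {Γ x p} : LabEKTC (.lab x (.neg (.iatom p)) ::ₘ Γ) x .bot →
      LabEKTC Γ x (.catom p)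
  | boxL {Γ x y A z C} : LabEKTC (.rel x y ::ₘ .lab y A ::ₘ .lab x (.box A) ::ₘ Γ) z C →
      LabEKTC (.rel x y ::ₘ .lab x (.box A) ::ₘ Γ) z C
  | boxR {Γ x A} (y : ℕ) (hfresh : y ≠ x ∧ FreshL y Γ) :
      LabEKTC (.rel x y ::ₘ Γ) y A → LabEKTC Γ x (.box A)
  | idiaL {Γ x A z C} (y : ℕ) (hfresh : y ≠ x ∧ y ≠ z ∧ FreshL y Γ) :
      LabEKTC (.rel x y ::ₘ .lab y A ::ₘ Γ) z C → LabEKTC (.lab x (.idia A) ::ₘ Γ) z C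
  | idiaR {Γ x y A} : LabEKTC (.rel x y ::ₘ Γ) y A →
      LabEKTC (.rel x y ::ₘ Γ) x (.idia A)
  | cdiaL {Γ x A} (y : ℕ) (hfresh : y ≠ x ∧ FreshL y Γ) :
      LabEKTC (.rel x y ::ₘ .lab y A ::ₘ Γ) x .bot →
      LabEKTC (.lab x (.cdia A) ::ₘ Γ) x .bot
  | cdiaR {Γ x A} : LabEKTC (.lab x (.box (.neg A)) ::ₘ Γ) x .bot →
      LabEKTC Γ x (.cdia A)
  | T {Γ : Multiset LForm} (x : ℕ) {w : ℕ} {C : MFormula} :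
      LabEKTC (.rel x x ::ₘ Γ) w C → LabEKTC Γ w C
  | cut {Γ : Multiset LForm} (x : ℕ) (A : MFormula) {z : ℕ} {C : MFormula} :
      LabEKTC Γ x A → LabEKTC (.lab x A ::ₘ Γ) z C → LabEKTC Γ z C
  | interdef (Γ : Multiset LForm) (z : ℕ) (B : MFormula) :
      LabEKTC Γ z (.iimp (.neg (.idia (.neg B))) (.box B))

/-- (i) `xRx ⊢ x:(□A →_i A) ∧ (A →_i ◇_iA)` is provable in
labEK; (ii) `⊢ x:¬◇_i¬(A ∨_i ¬A)` is provable in labEK; (iii) in labEK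
extended with the reflexivity rule `T`, the sequent
`x:□(A ∨_i ¬A) ⊢ x:(A ∨_i ¬A)` is provable; and consequently, in labEK + T
with cut and the inter-definability axiom scheme `¬◇_i¬B →_i □B`,
`⊢ x:(A ∨_i ¬A)` is provable for every `A` — intuitionistic KT collapses to a
classical system. -/
theorem stmt_19 (A : MFormula) (x : ℕ) :
    LabEK {LForm.rel x x} x (.conj (.iimp (.box A) A) (.iimp A (.idia A))) ∧
    LabEK 0 x (.neg (.idia (.neg (.ivee A (.neg A))))) ∧
    LabEKT {LForm.lab x (.box (.ivee A (.neg A)))} x (.ivee A (.neg A)) ∧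
    LabEKTC 0 x (.ivee A (.neg A)) := by

  refine ⟨?_, ?_, ?_, ?_⟩
  · apply LabEK.andR
    · apply LabEK.iimpR
      rw [show (LForm.lab x (.box A) ::ₘ {LForm.rel x x}) =
          (LForm.rel x x ::ₘ LForm.lab x (.box A) ::ₘ 0) from Multiset.cons_swap _ _ _]
      apply LabEK.boxL
      rw [Multiset.cons_swap]
      exact LabEK.init x A _
    · apply LabEK.iimpR
      rw [show (LForm.lab x A ::ₘ {LForm.rel x x}) =
          (LForm.rel x x ::ₘ LForm.lab x A ::ₘ 0) from Multiset.cons_swap _ _ _]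
      apply LabEK.idiaR
      rw [Multiset.cons_swap]
      exact LabEK.init x A _
  · apply LabEK.negR
    apply LabEK.idiaL (x + 1)
      ⟨by omega, by omega, fun f hf => absurd hf (Multiset.notMem_zero f)⟩
    apply LabEK.weak (x + 1)
    rw [Multiset.cons_swap]
    apply LabEK.negL
    apply LabEK.iveeR2
    apply LabEK.negR
    rw [Multiset.cons_swap]
    apply LabEK.negL
    apply LabEK.iveeR1
    rw [Multiset.cons_swap]
    exact LabEK.init _ _ _
  · apply LabEKT.T x
    apply LabEKT.boxL
    rw [Multiset.cons_swap]
    apply LabEKT.iveeL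
    · exact LabEKT.iveeR1 (LabEKT.init _ _ _)
    · exact LabEKT.iveeR2 (LabEKT.init _ _ _)
  · apply LabEKTC.cut x (.box (.ivee A (.neg A)))
    · apply LabEKTC.cut x (.iimp (.neg (.idia (.neg (.ivee A (.neg A)))))
        (.box (.ivee A (.neg A))))
      · exact LabEKTC.interdef 0 x _
      · apply LabEKTC.iimpL
        · apply LabEKTC.negR
          apply LabEKTC.idiaL (x + 1) ?fresh
          case fresh =>
            refine ⟨by omega, by omega, ?_⟩
            intro f hf
            simp only [Multiset.mem_cons, Multiset.notMem_zero, or_false] at hf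
            subst hf
            simp [LForm.labels]
          apply LabEKTC.weak (x + 1)
          rw [Multiset.cons_swap]
          apply LabEKTC.negL
          apply LabEKTC.iveeR2
          apply LabEKTC.negR
          rw [Multiset.cons_swap]
          apply LabEKTC.negL
          apply LabEKTC.iveeR1
          rw [Multiset.cons_swap]
          exact LabEKTC.init _ _ _
        · exact LabEKTC.init _ _ _
    · apply LabEKTC.T x
      apply LabEKTC.boxL
      rw [Multiset.cons_swap]
      apply LabEKTC.iveeL
      · exact LabEKTC.iveeR1 (LabEKTC.init _ _ _)
      · exact LabEKTC.iveeR2 (LabEKTC.init _ _ _)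
end
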